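/- Consider a commutative ladder of exact sequences of rational vector spaces with top row H_{n+1}(X) →^{Λ_X} H_{n-1}(X) →^{p*} H_n(ℓ_X) →^{p_*} H_n(X) →^{Λ_X} H_{n-2}(X) and bottom row H_{n+1}(Y) →^{Λ_Y} H_{n-1}(Y) →^{q*} H_n(ℓ_Y) →^{q_*} H_n(Y) →^{Λ_Y} H_{n-2}(Y), both exact, with vertical maps commuting. Assume: the first Λ_X is injective, the last Λ_X is an isomorphism, the first Λ_Y is an isomorphism, and the last Λ_Y is surjective. Then the middle vertical map H_n(ℓ_X) → H_n(ℓ_Y) is zero. -/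
import Mathlib


/-- Proposition 3.1 (diagram chase): a commutative ladder of two exact
5-term sequences of ℚ-vector spaces
`H_{n+1}(X) →^{Λ_X} H_{n-1}(X) →^{p^*} H_n(ℓ_X) →^{p_*} H_n(X) →^{Λ_X} H_{n-2}(X)` and
`H_{n+1}(Y) →^{Λ_Y} H_{n-1}(Y) →^{q^*} H_n(ℓ_Y) →^{q_*} H_n(Y) →^{Λ_Y} H_{n-2}(Y)`,
both exact at the three inner terms, with commuting vertical maps.
If the first `Λ_X` is injective, the last `Λ_X` is bijective, the first `Λ_Y`
is bijective and the last `Λ_Y` is surjective, then the middle vertical map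
`H_n(ℓ_X) → H_n(ℓ_Y)` is zero. -/
theorem stmt8
    {A₁ A₂ A₃ A₄ A₅ B₁ B₂ B₃ B₄ B₅ : Type*}
    [AddCommGroup A₁] [Module ℚ A₁] [AddCommGroup A₂] [Module ℚ A₂]
    [AddCommGroup A₃] [Module ℚ A₃] [AddCommGroup A₄] [Module ℚ A₄]
    [AddCommGroup A₅] [Module ℚ A₅]
    [AddCommGroup B₁] [Module ℚ B₁] [AddCommGroup B₂] [Module ℚ B₂]
    [AddCommGroup B₃] [Module ℚ B₃] [AddCommGroup B₄] [Module ℚ B₄]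
    [AddCommGroup B₅] [Module ℚ B₅]
    (ΛX₁ : A₁ →ₗ[ℚ] A₂) (pS : A₂ →ₗ[ℚ] A₃) (pL : A₃ →ₗ[ℚ] A₄) (ΛX₂ : A₄ →ₗ[ℚ] A₅)
    (ΛY₁ : B₁ →ₗ[ℚ] B₂) (qS : B₂ →ₗ[ℚ] B₃) (qL : B₃ →ₗ[ℚ] B₄) (ΛY₂ : B₄ →ₗ[ℚ] B₅)
    (v₁ : A₁ →ₗ[ℚ] B₁) (v₂ : A₂ →ₗ[ℚ] B₂) (c : A₃ →ₗ[ℚ] B₃)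
    (v₄ : A₄ →ₗ[ℚ] B₄) (v₅ : A₅ →ₗ[ℚ] B₅)
    -- exactness of both rows at the three inner positions
    (hexA₁ : Function.Exact ΛX₁ pS) (hexA₂ : Function.Exact pS pL)
    (hexA₃ : Function.Exact pL ΛX₂)
    (hexB₁ : Function.Exact ΛY₁ qS) (hexB₂ : Function.Exact qS qL)
    (hexB₃ : Function.Exact qL ΛY₂)
    -- commutativity of the ladder
    (sq₁ : ΛY₁.comp v₁ = v₂.comp ΛX₁) (sq₂ : qS.comp v₂ = c.comp pS)
    (sq₃ : qL.comp c = v₄.comp pL) (sq₄ : ΛY₂.comp v₄ = v₅.comp ΛX₂)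
    -- Hard Lefschetz hypotheses
    (h₁ : Function.Injective ΛX₁) (h₂ : Function.Bijective ΛX₂)
    (h₃ : Function.Bijective ΛY₁) (h₄ : Function.Surjective ΛY₂) :
    c = 0 := by
  ext x
  -- pL x = 0 since ΛX₂ ∘ pL = 0 and ΛX₂ injective
  have hpl : pL x = 0 := h₂.injective (by
    rw [map_zero]
    exact (hexA₃ (pL x)).mpr ⟨x, rfl⟩)
  -- lift x through pS
  obtain ⟨a, ha⟩ := (hexA₂ x).mp hpl
  -- lift v₂ a through ΛY₁
  obtain ⟨b, hb⟩ := h₃.surjective (v₂ a)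
  have : c x = qS (v₂ a) := by
    rw [← ha, ← LinearMap.comp_apply, ← sq₂, LinearMap.comp_apply]
  rw [this, ← hb]
  simpa using (hexB₁ (ΛY₁ b)).mpr ⟨b, rfl⟩
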